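/- Let m, k ≥ 1, n = m + k. Let α_ν : ℝⁿ × ℝᵐ × ℝ → ℝ (ν = 1,…,k) be C² functions of (q₁,…,qₙ, q̇₁,…,q̇_m, t); set ᾱ_ν := Σ_{i=1}^m q̇_i ∂α_ν/∂q̇_i, and define B_i^ν and B̄_ν as in the Voronec-type formalism, namely B_i^ν := Σ_{r=1}^m (∂²α_ν/(∂q̇_i∂q_r) q̇_r + ∂²α_ν/(∂q̇_i∂q̇_r) q̈_r) − ∂α_ν/∂q_i + Σ_{μ=1}^k (∂²α_ν/(∂q̇_i∂q_{m+μ}) α_μ − (∂α_μ/∂q̇_i)(∂α_ν/∂q_{m+μ})) + ∂²α_ν/(∂q̇_i∂t), and B̄_ν := Σ_{r=1}^m q̇_r (∂ᾱ_ν/∂q_r − ∂α_ν/∂q_r) + Σ_{μ=1}^k (α_μ ∂ᾱ_ν/∂q_{m+μ} − ᾱ_μ ∂α_ν/∂q_{m+μ}) + Σ_{r=1}^m q̈_r (∂ᾱ_ν/∂q̇_r − ∂α_ν/∂q̇_r) + ∂ᾱ_ν/∂t. Let T : ℝⁿ × ℝⁿ × ℝ → ℝ be a C² kinetic energy, define T*(q₁,…,qₙ,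 q̇₁,…,q̇_m, t) := T(q₁,…,qₙ, q̇₁,…,q̇_m, α₁,…,α_k, t), let U : ℝⁿ × ℝ → ℝ be a C² potential, and set L* := T* + U. Suppose q(t) is a C² admissible curve (q̇_{m+ν} = α_ν along the curve) satisfying the equations of motion: for each i = 1,…,m, d/dt(∂T*/∂q̇_i) − ∂T*/∂q_i − Σ_{ν=1}^k (∂T*/∂q_{m+ν})(∂α_ν/∂q̇_i) − Σ_{ν=1}^k B_i^ν ∂T/∂q̇_{m+ν} = ∂U/∂q_i + Σ_{ν=1}^k (∂α_ν/∂q̇_i)(∂U/∂q_{m+ν}), where in ∂T/∂q̇_{m+ν} the dependent velocities are replaced by α₁,…,α_k. Then along the curve: d/dt( Σ_{i=1}^m q̇_i ∂L*/∂q̇_i − L* ) − Σ_{ν=1}^k (ᾱ_ν − α_ν) ∂L*/∂q_{m+ν} − Σ_{ν=1}^k B̄_ν ∂T/∂q̇_{m+ν} = − ∂L*/∂t. -/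

import Mathlib

open scoped BigOperators

noncomputable section

/-- A phase point: positions `q ∈ ℝⁿ`, independent velocities `v ∈ ℝᵐ`, and time `t`. -/
abbrev PhasePt (n m : ℕ) : Type := (Fin n → ℝ) × (Fin m → ℝ) × ℝ

/-- Partial derivative of `f : PhasePt n m → ℝ` with respect to the coordinate `q i`. -/
def pq {n m : ℕ} (f : PhasePt n m → ℝ) (i : Fin n) (p : PhasePt n m) : ℝ :=
  fderiv ℝ f p (Pi.single i 1, 0, 0)

/-- Partial derivative with respect to the independent velocity `q̇ r`. -/
def pv {n m : ℕ} (f : PhasePt n m → ℝ) (r : Fin m) (p : PhasePt n m) : ℝ :=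
  fderiv ℝ f p (0, Pi.single r 1, 0)

/-- Partial derivative with respect to time. -/
def ptime {n m : ℕ} (f : PhasePt n m → ℝ) (p : PhasePt n m) : ℝ :=
  fderiv ℝ f p (0, 0, 1)

variable {m k : ℕ}

/-- The independent velocities `q̇ 1, …, q̇ m` along a curve. -/
def ivel (q : ℝ → Fin (m + k) → ℝ) (t : ℝ) : Fin m → ℝ :=
  fun i => deriv q t (Fin.castAdd k i)

/-- The second derivatives `q̈ r` of the independent coordinates along a curve. -/
def iacc (q : ℝ → Fin (m + k) → ℝ) (t : ℝ) : Fin m → ℝ :=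
  fun i => deriv (deriv q) t (Fin.castAdd k i)

/-- The phase-space lift `(q(t), q̇ ₁(t),…,q̇ _m(t), t)` of a curve. -/
def plift (q : ℝ → Fin (m + k) → ℝ) (t : ℝ) : PhasePt (m + k) m :=
  (q t, ivel q t, t)

/-- A curve is admissible when the constraints `q̇ (m+ν) = α ν` hold along it. -/
def Admissible (α : Fin k → PhasePt (m + k) m → ℝ) (q : ℝ → Fin (m + k) → ℝ) : Prop :=
  ∀ (t : ℝ) (ν : Fin k), deriv q t (Fin.natAdd m ν) = α ν (plift q t)

/-- `ᾱ ν := ∑ i q̇ i ∂α ν/∂q̇ i`. -/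
def abar (α : Fin k → PhasePt (m + k) m → ℝ) (ν : Fin k) (p : PhasePt (m + k) m) : ℝ :=
  ∑ i : Fin m, p.2.1 i * pv (α ν) i p

/-- The Voronec coefficient `B i ν` (formula (11) of the paper), along a curve. -/
def Bcoef (α : Fin k → PhasePt (m + k) m → ℝ) (q : ℝ → Fin (m + k) → ℝ)
    (t : ℝ) (ν : Fin k) (i : Fin m) : ℝ :=
  (∑ r : Fin m, (pq (pv (α ν) i) (Fin.castAdd k r) (plift q t) * ivel q t r
      + pv (pv (α ν) i) r (plift q t) * iacc q t r))
  - pq (α ν) (Fin.castAdd k i) (plift q t)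
  + (∑ μ : Fin k, (pq (pv (α ν) i) (Fin.natAdd m μ) (plift q t) * α μ (plift q t)
      - pv (α μ) i (plift q t) * pq (α ν) (Fin.natAdd m μ) (plift q t)))
  + ptime (pv (α ν) i) (plift q t)

/-- The coefficient `B̄ ν` (formula (15) of the paper), along a curve. -/
def Bbar (α : Fin k → PhasePt (m + k) m → ℝ) (q : ℝ → Fin (m + k) → ℝ)
    (t : ℝ) (ν : Fin k) : ℝ :=
  (∑ r : Fin m, ivel q t r *
      (pq (abar α ν) (Fin.castAdd k r) (plift q t) - pq (α ν) (Fin.castAdd k r) (plift q t)))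
  + (∑ μ : Fin k, (α μ (plift q t) * pq (abar α ν) (Fin.natAdd m μ) (plift q t)
      - abar α μ (plift q t) * pq (α ν) (Fin.natAdd m μ) (plift q t)))
  + (∑ r : Fin m, iacc q t r * (pv (abar α ν) r (plift q t) - pv (α ν) r (plift q t)))
  + ptime (abar α ν) (plift q t)

/-- The full velocity vector `(q̇ ₁,…,q̇ _m, α₁,…,α_k)` obtained from a phase point. -/
def extVel (α : Fin k → PhasePt (m + k) m → ℝ) (p : PhasePt (m + k) m) : Fin (m + k) → ℝ :=
  Fin.append p.2.1 (fun ν => α ν p)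

/-- Restriction `T*` of a kinetic energy `T` by substituting `q̇ (m+ν) = α ν`. -/
def subst (α : Fin k → PhasePt (m + k) m → ℝ) (T : PhasePt (m + k) (m + k) → ℝ)
    (p : PhasePt (m + k) m) : ℝ :=
  T (p.1, extVel α p, p.2.2)

/-- `∂T/∂q̇ (m+ν)` with the dependent velocities replaced by `α₁, …, α_k`. -/
def pvT (α : Fin k → PhasePt (m + k) m → ℝ) (T : PhasePt (m + k) (m + k) → ℝ)
    (ν : Fin k) (p : PhasePt (m + k) m) : ℝ :=
  pv T (Fin.natAdd m ν) (p.1, extVel α p, p.2.2)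

/-- Partial derivative of a potential `U(q, t)` with respect to `q j`. -/
def pqU {n : ℕ} (U : (Fin n → ℝ) × ℝ → ℝ) (j : Fin n) (p : (Fin n → ℝ) × ℝ) : ℝ :=
  fderiv ℝ U p (Pi.single j 1, 0)

/-- Partial derivative of a potential `U(q, t)` with respect to time. -/
def ptU {n : ℕ} (U : (Fin n → ℝ) × ℝ → ℝ) (p : (Fin n → ℝ) × ℝ) : ℝ :=
  fderiv ℝ U p (0, 1)

/-- The Lagrangian `L* = T* + U` in terms of the independent velocities. -/
def Lag (α : Fin k → PhasePt (m + k) m → ℝ) (T : PhasePt (m + k) (m + k) → ℝ)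
    (U : (Fin (m + k) → ℝ) × ℝ → ℝ) (p : PhasePt (m + k) m) : ℝ :=
  subst α T p + U (p.1, p.2.2)

/-- The energy `∑ i q̇ i ∂L*/∂q̇ i − L*` of a function `L*` along a curve. -/
def energy (L : PhasePt (m + k) m → ℝ) (q : ℝ → Fin (m + k) → ℝ) (t : ℝ) : ℝ :=
  (∑ i : Fin m, ivel q t i * pv L i (plift q t)) - L (plift q t)


/-!
Along the curve, the chain rule gives
`dE/dt = ∑ i q̇ᵢ (d/dt ∂L*/∂q̇ᵢ − ∂L*/∂qᵢ) − ∑ ν αν ∂L*/∂q_{m+ν} − ∂L*/∂t`.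
As `U` does not depend on the velocities, `∂L*/∂q̇ᵢ = ∂T*/∂q̇ᵢ`, and the equations of motion become
`d/dt ∂L*/∂q̇ᵢ − ∂L*/∂qᵢ = ∑ ν ∂αν/∂q̇ᵢ ∂L*/∂q_{m+ν} + ∑ ν Bᵢ^ν ∂T/∂q̇_{m+ν}`.
Contracting with `q̇ᵢ` turns `∂αν/∂q̇ᵢ` into `ᾱν` and, by the product rule applied to
`ᾱν = ∑ i q̇ᵢ ∂αν/∂q̇ᵢ`, turns `Bᵢ^ν` into `B̄ν`.
-/

theorem Finset.sum_mul_sum_mul_comm {ι κ R : Type*} [Fintype ι] [Fintype κ] [CommSemiring R]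
    (v : ι → R) (a : κ → ι → R) (x : κ → R) :
    ∑ i, v i * ∑ j, a j i * x j = ∑ j, (∑ i, v i * a j i) * x j := by
  simp only [Finset.mul_sum, Finset.sum_mul, mul_assoc]
  exact Finset.sum_comm

theorem Finset.sum_mul_sum_comm {ι κ R : Type*} [Fintype ι] [Fintype κ] [CommSemiring R]
    (a : κ → R) (b : ι → R) (c : ι → κ → R) :
    ∑ j, a j * ∑ i, b i * c i j = ∑ i, b i * ∑ j, c i j * a j := by
  simp only [Finset.mul_sum]
  rw [Finset.sum_comm]
  exact Finset.sum_congr rfl fun i _ => Finset.sum_congr rfl fun j _ => by ring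

section PhaseSpace

variable {n m : ℕ}

theorem PhasePt.clm_apply_eq_sum (D : PhasePt n m →L[ℝ] ℝ) (w : PhasePt n m) :
    D w = ∑ j, w.1 j * D (Pi.single j 1, 0, 0) + ∑ r, w.2.1 r * D (0, Pi.single r 1, 0)
      + w.2.2 * D (0, 0, 1) := by
  have hw : w = ∑ j, w.1 j • ((Pi.single j 1, 0, 0) : PhasePt n m)
      + ∑ r, w.2.1 r • ((0, Pi.single r 1, 0) : PhasePt n m) + w.2.2 • (0, 0, 1) := by
    ext <;> simp [Prod.fst_sum, Prod.snd_sum, Finset.sum_apply, Pi.single_apply]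
  conv_lhs => rw [hw]
  simp only [map_add, map_sum, map_smul, smul_eq_mul]

theorem deriv_comp_eq_sum {f : PhasePt n m → ℝ} {γ : ℝ → PhasePt n m} {γ' : PhasePt n m}
    {t : ℝ} (hf : DifferentiableAt ℝ f (γ t)) (hγ : HasDerivAt γ γ' t) :
    deriv (fun s => f (γ s)) t = ∑ j, γ'.1 j * pq f j (γ t) + ∑ r, γ'.2.1 r * pv f r (γ t)
      + γ'.2.2 * ptime f (γ t) :=
  (hf.hasFDerivAt.comp_hasDerivAt t hγ).deriv.trans (PhasePt.clm_apply_eq_sum _ _)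

theorem ContDiff.differentiable_pv {f : PhasePt n m → ℝ} (hf : ContDiff ℝ 2 f) (r : Fin m) :
    Differentiable ℝ (pv f r) :=
  ((hf.fderiv_right le_rfl).clm_apply contDiff_const).differentiable one_ne_zero

end PhaseSpace

section Curve

variable {q : ℝ → Fin (m + k) → ℝ}

theorem hasDerivAt_ivel (hq : ContDiff ℝ 2 q) (t : ℝ) : HasDerivAt (ivel q) (iacc q t) t :=
  hasDerivAt_pi.mpr fun i =>
    hasDerivAt_pi.mp (hq.differentiable_deriv_two t).hasDerivAt (Fin.castAdd k i)

theorem hasDerivAt_plift (hq : ContDiff ℝ 2 q) (t : ℝ) :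
    HasDerivAt (plift q) (deriv q t, iacc q t, 1) t :=
  ((hq.differentiable two_ne_zero t).hasDerivAt).prodMk
    ((hasDerivAt_ivel hq t).prodMk (hasDerivAt_id t))

theorem deriv_comp_plift {α : Fin k → PhasePt (m + k) m → ℝ} (hq : ContDiff ℝ 2 q)
    (hadm : Admissible α q) {f : PhasePt (m + k) m → ℝ} {t : ℝ}
    (hf : DifferentiableAt ℝ f (plift q t)) :
    deriv (fun s => f (plift q s)) t
      = ∑ i, ivel q t i * pq f (Fin.castAdd k i) (plift q t)
        + ∑ ν, α ν (plift q t) * pq f (Fin.natAdd m ν) (plift q t)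
        + ∑ r, iacc q t r * pv f r (plift q t) + ptime f (plift q t) := by
  rw [deriv_comp_eq_sum hf (hasDerivAt_plift hq t), Fin.sum_univ_add, one_mul]
  simp only [hadm t]
  rfl

theorem deriv_energy {α : Fin k → PhasePt (m + k) m → ℝ} {L : PhasePt (m + k) m → ℝ}
    (hq : ContDiff ℝ 2 q) (hadm : Admissible α q) (hL : ContDiff ℝ 2 L) (t : ℝ) :
    deriv (fun s => energy L q s) t
      = ∑ i, ivel q t i * (deriv (fun s => pv L i (plift q s)) t
          - pq L (Fin.castAdd k i) (plift q t))
        - ∑ ν, α ν (plift q t) * pq L (Fin.natAdd m ν) (plift q t) - ptime L (plift q t) := by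
  have hlift := (hasDerivAt_plift hq t).differentiableAt
  have hvel : ∀ i, HasDerivAt (fun s => ivel q s i) (iacc q t i) t := fun i =>
    hasDerivAt_pi.mp (hasDerivAt_ivel hq t) i
  have hmom : ∀ i, HasDerivAt (fun s => pv L i (plift q s))
      (deriv (fun s => pv L i (plift q s)) t) t := fun i =>
    ((hL.differentiable_pv i _).comp t hlift).hasDerivAt
  have hlag : HasDerivAt (fun s => L (plift q s)) (deriv (fun s => L (plift q s)) t) t :=
    ((hL.differentiable two_ne_zero _).comp t hlift).hasDerivAt
  have henergy : HasDerivAt (fun s => energy L q s)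
      (∑ i, (iacc q t i * pv L i (plift q t) + ivel q t i * deriv (fun s => pv L i (plift q s)) t)
        - deriv (fun s => L (plift q s)) t) t :=
    (HasDerivAt.fun_sum fun i _ => (hvel i).mul (hmom i)).sub hlag
  rw [henergy.deriv, deriv_comp_plift hq hadm (hL.differentiable two_ne_zero _)]
  simp only [mul_sub, Finset.sum_add_distrib, Finset.sum_sub_distrib]
  ring

end Curve

section Lagrangian

variable {α : Fin k → PhasePt (m + k) m → ℝ} {T : PhasePt (m + k) (m + k) → ℝ}
  {U : (Fin (m + k) → ℝ) × ℝ → ℝ}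

theorem contDiff_extVel {n : WithTop ℕ∞} (hα : ∀ ν, ContDiff ℝ n (α ν)) :
    ContDiff ℝ n (extVel α) := by
  refine contDiff_pi.mpr fun j => Fin.addCases (fun i => ?_) (fun ν => ?_) j
  · simp only [extVel, Fin.append_left]
    exact contDiff_pi.mp (contDiff_fst.comp contDiff_snd) i
  · simpa only [extVel, Fin.append_right] using hα ν

theorem contDiff_subst {n : WithTop ℕ∞} (hα : ∀ ν, ContDiff ℝ n (α ν)) (hT : ContDiff ℝ n T) :
    ContDiff ℝ n (subst α T) :=
  hT.comp (contDiff_fst.prodMk ((contDiff_extVel hα).prodMk (contDiff_snd.comp contDiff_snd)))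

theorem contDiff_Lag {n : WithTop ℕ∞} (hα : ∀ ν, ContDiff ℝ n (α ν)) (hT : ContDiff ℝ n T)
    (hU : ContDiff ℝ n U) : ContDiff ℝ n (Lag α T U) :=
  (contDiff_subst hα hT).add (hU.comp (contDiff_fst.prodMk (contDiff_snd.comp contDiff_snd)))

theorem fderiv_Lag_apply {p : PhasePt (m + k) m} (hS : DifferentiableAt ℝ (subst α T) p)
    (hU : DifferentiableAt ℝ U (p.1, p.2.2)) (w : PhasePt (m + k) m) :
    fderiv ℝ (Lag α T U) p w = fderiv ℝ (subst α T) p w + fderiv ℝ U (p.1, p.2.2) (w.1, w.2.2) := by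
  let G : PhasePt (m + k) m →L[ℝ] (Fin (m + k) → ℝ) × ℝ :=
    (ContinuousLinearMap.fst ℝ _ _).prod
      ((ContinuousLinearMap.snd ℝ _ _).comp (ContinuousLinearMap.snd ℝ _ _))
  have hL : HasFDerivAt (Lag α T U) (fderiv ℝ (subst α T) p + (fderiv ℝ U (G p)).comp G) p :=
    hS.hasFDerivAt.add (hU.hasFDerivAt.comp p G.hasFDerivAt)
  rw [hL.fderiv]
  rfl

theorem pq_Lag {p : PhasePt (m + k) m} (hS : DifferentiableAt ℝ (subst α T) p)
    (hU : DifferentiableAt ℝ U (p.1, p.2.2)) (j : Fin (m + k)) :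
    pq (Lag α T U) j p = pq (subst α T) j p + pqU U j (p.1, p.2.2) :=
  fderiv_Lag_apply hS hU _

theorem pv_Lag {p : PhasePt (m + k) m} (hS : DifferentiableAt ℝ (subst α T) p)
    (hU : DifferentiableAt ℝ U (p.1, p.2.2)) (r : Fin m) :
    pv (Lag α T U) r p = pv (subst α T) r p := by
  simpa [pv, Prod.mk_zero_zero] using fderiv_Lag_apply hS hU (0, Pi.single r 1, 0)

end Lagrangian

section Constraint

variable {α : Fin k → PhasePt (m + k) m → ℝ} {ν : Fin k} {p : PhasePt (m + k) m}

theorem fderiv_abar_apply (hα : ∀ i, DifferentiableAt ℝ (pv (α ν) i) p) (w : PhasePt (m + k) m) :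
    fderiv ℝ (abar α ν) p w
      = ∑ i, (p.2.1 i * fderiv ℝ (pv (α ν) i) p w + pv (α ν) i p * w.2.1 i) := by
  let vel : Fin m → PhasePt (m + k) m →L[ℝ] ℝ := fun i =>
    (ContinuousLinearMap.proj i).comp
      ((ContinuousLinearMap.fst ℝ _ _).comp (ContinuousLinearMap.snd ℝ _ _))
  have h : HasFDerivAt (abar α ν)
      (∑ i, (p.2.1 i • fderiv ℝ (pv (α ν) i) p + pv (α ν) i p • vel i)) p :=
    HasFDerivAt.fun_sum fun i _ => (vel i).hasFDerivAt.mul (hα i).hasFDerivAt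
  simp only [h.fderiv, FunLike.coe_sum, Finset.sum_apply, FunLike.coe_add, Pi.add_apply,
    FunLike.coe_smul, Pi.smul_apply, smul_eq_mul]
  rfl

theorem pq_abar (hα : ∀ i, DifferentiableAt ℝ (pv (α ν) i) p) (j : Fin (m + k)) :
    pq (abar α ν) j p = ∑ i, p.2.1 i * pq (pv (α ν) i) j p := by
  simpa [pq] using fderiv_abar_apply hα (Pi.single j 1, 0, 0)

theorem pv_abar (hα : ∀ i, DifferentiableAt ℝ (pv (α ν) i) p) (r : Fin m) :
    pv (abar α ν) r p = ∑ i, p.2.1 i * pv (pv (α ν) i) r p + pv (α ν) r p := by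
  simpa [pv, Finset.sum_add_distrib, Pi.single_apply] using
    fderiv_abar_apply hα (0, Pi.single r 1, 0)

theorem ptime_abar (hα : ∀ i, DifferentiableAt ℝ (pv (α ν) i) p) :
    ptime (abar α ν) p = ∑ i, p.2.1 i * ptime (pv (α ν) i) p := by
  simpa [ptime] using fderiv_abar_apply hα (0, 0, 1)

theorem Bbar_eq_sum_ivel_mul_Bcoef {q : ℝ → Fin (m + k) → ℝ} {t : ℝ}
    (hα : ∀ i, DifferentiableAt ℝ (pv (α ν) i) (plift q t)) :
    Bbar α q t ν = ∑ i, ivel q t i * Bcoef α q t ν i := by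
  simp only [Bbar, Bcoef, pq_abar hα, pv_abar hα, ptime_abar hα, abar, add_sub_cancel_right,
    mul_sub, Finset.sum_sub_distrib, Finset.sum_mul_sum_comm, ← Finset.sum_mul_sum_mul_comm]
  simp only [show (plift q t).2.1 = ivel q t from rfl, Finset.sum_add_distrib, mul_add, mul_sub,
    Finset.sum_sub_distrib]
  ring

end Constraint

theorem eom_lagrangian_form {α : Fin k → PhasePt (m + k) m → ℝ}
    {T : PhasePt (m + k) (m + k) → ℝ} {U : (Fin (m + k) → ℝ) × ℝ → ℝ}
    {q : ℝ → Fin (m + k) → ℝ} {t : ℝ} {i : Fin m}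
    (hS : Differentiable ℝ (subst α T)) (hU : Differentiable ℝ U)
    (heom : deriv (fun s => pv (subst α T) i (plift q s)) t
        - pq (subst α T) (Fin.castAdd k i) (plift q t)
        - (∑ ν : Fin k, pq (subst α T) (Fin.natAdd m ν) (plift q t) * pv (α ν) i (plift q t))
        - (∑ ν : Fin k, Bcoef α q t ν i * pvT α T ν (plift q t)) =
      pqU U (Fin.castAdd k i) (q t, t)
        + ∑ ν : Fin k, pv (α ν) i (plift q t) * pqU U (Fin.natAdd m ν) (q t, t)) :
    deriv (fun s => pv (Lag α T U) i (plift q s)) t - pq (Lag α T U) (Fin.castAdd k i) (plift q t)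
      = ∑ ν, pv (α ν) i (plift q t) * pq (Lag α T U) (Fin.natAdd m ν) (plift q t)
        + ∑ ν, Bcoef α q t ν i * pvT α T ν (plift q t) := by
  have hmom : (fun s => pv (Lag α T U) i (plift q s)) = fun s => pv (subst α T) i (plift q s) :=
    funext fun s => pv_Lag (hS _) (hU _) i
  have hqt : ((plift q t).1, (plift q t).2.2) = (q t, t) := rfl
  simp only [mul_comm (pq (subst α T) _ _)] at heom
  simp only [hmom, pq_Lag (hS _) (hU _), hqt, mul_add, Finset.sum_add_distrib]
  linarith

theorem energy_balance_general
    (m k : ℕ)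
    (α : Fin k → PhasePt (m + k) m → ℝ) (hα : ∀ ν, ContDiff ℝ 2 (α ν))
    (T : PhasePt (m + k) (m + k) → ℝ) (hT : ContDiff ℝ 2 T)
    (U : (Fin (m + k) → ℝ) × ℝ → ℝ) (hU : ContDiff ℝ 2 U)
    (q : ℝ → Fin (m + k) → ℝ) (hq : ContDiff ℝ 2 q)
    (hadm : Admissible α q)
    (heom : ∀ (t : ℝ) (i : Fin m),
      deriv (fun s => pv (subst α T) i (plift q s)) t
        - pq (subst α T) (Fin.castAdd k i) (plift q t)
        - (∑ ν : Fin k, pq (subst α T) (Fin.natAdd m ν) (plift q t) * pv (α ν) i (plift q t))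
        - (∑ ν : Fin k, Bcoef α q t ν i * pvT α T ν (plift q t)) =
      pqU U (Fin.castAdd k i) (q t, t)
        + ∑ ν : Fin k, pv (α ν) i (plift q t) * pqU U (Fin.natAdd m ν) (q t, t)) :
    ∀ t : ℝ,
      deriv (fun s => energy (Lag α T U) q s) t
        - (∑ ν : Fin k, (abar α ν (plift q t) - α ν (plift q t))
            * pq (Lag α T U) (Fin.natAdd m ν) (plift q t))
        - (∑ ν : Fin k, Bbar α q t ν * pvT α T ν (plift q t)) =
      - ptime (Lag α T U) (plift q t) := by
  intro t
  have heomL : ∀ i, _ := fun i => eom_lagrangian_form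
    ((contDiff_subst hα hT).differentiable two_ne_zero) (hU.differentiable two_ne_zero) (heom t i)
  have habar : ∀ ν, abar α ν (plift q t) = ∑ i, ivel q t i * pv (α ν) i (plift q t) :=
    fun ν => rfl
  rw [deriv_energy hq hadm (contDiff_Lag hα hT hU)]
  simp only [heomL, habar, Bbar_eq_sum_ivel_mul_Bcoef fun i => (hα _).differentiable_pv i _,
    mul_add, Finset.sum_add_distrib, Finset.sum_mul_sum_mul_comm, sub_mul, Finset.sum_sub_distrib]
  ring

/-- Proposition 2 of the paper: energy balance (13).  Along every
admissible `C²` solution of the Voronec-type equations of motion with potential forces,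
`d/dt(∑ i q̇ i ∂L*/∂q̇ i − L*) − ∑ ν (ᾱ ν − α ν) ∂L*/∂q (m+ν) − ∑ ν B̄ ν ∂T/∂q̇ (m+ν)
  = − ∂L*/∂t`, where `L* = T* + U`. -/
theorem energy_balance
    (m k : ℕ) (hm : 1 ≤ m) (hk : 1 ≤ k)
    (α : Fin k → PhasePt (m + k) m → ℝ) (hα : ∀ ν, ContDiff ℝ 2 (α ν))
    (T : PhasePt (m + k) (m + k) → ℝ) (hT : ContDiff ℝ 2 T)
    (U : (Fin (m + k) → ℝ) × ℝ → ℝ) (hU : ContDiff ℝ 2 U)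
    (q : ℝ → Fin (m + k) → ℝ) (hq : ContDiff ℝ 2 q)
    (hadm : Admissible α q)
    (heom : ∀ (t : ℝ) (i : Fin m),
      deriv (fun s => pv (subst α T) i (plift q s)) t
        - pq (subst α T) (Fin.castAdd k i) (plift q t)
        - (∑ ν : Fin k, pq (subst α T) (Fin.natAdd m ν) (plift q t) * pv (α ν) i (plift q t))
        - (∑ ν : Fin k, Bcoef α q t ν i * pvT α T ν (plift q t)) =
      pqU U (Fin.castAdd k i) (q t, t)
        + ∑ ν : Fin k, pv (α ν) i (plift q t) * pqU U (Fin.natAdd m ν) (q t, t)) :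
    ∀ t : ℝ,
      deriv (fun s => energy (Lag α T U) q s) t
        - (∑ ν : Fin k, (abar α ν (plift q t) - α ν (plift q t))
            * pq (Lag α T U) (Fin.natAdd m ν) (plift q t))
        - (∑ ν : Fin k, Bbar α q t ν * pvT α T ν (plift q t)) =
      - ptime (Lag α T U) (plift q t) :=
  energy_balance_general m k α hα T hT U hU q hq hadm heom

end
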